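/- Let M ≥ 0, 0 ≤ α ≤ min{1, 2/(1+M)}, t ≥ 0, and let u, v : (−1,1) → ℝ be measurable functions such that almost everywhere u ≥ −1, 0 ≤ v ≤ M, u ≤ v, and ‖v‖_{L²(−1,1)} ≤ √2·M·e^{−μ₁ t}. Then ∫_{−1}^{1} ζ₁(x)(u(x) + (α/2)u(x)²) dx ≤ π(M + M²)e^{−μ₁ t}. -/

import Mathlib

open Real Set MeasureTheory

/-- The normalized principal Dirichlet eigenfunction of `-d²/dx²` on `(-1,1)`. -/
noncomputable def zeta1 (x : ℝ) : ℝ := π / 4 * Real.cos (π * x / 2)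

/-!
Pointwise, `s ↦ s + (α/2) s²` is increasing on `[-1, ∞)` because `α ≤ 1`, so `u ≤ v` gives
`u + (α/2) u² ≤ v + (α/2) v² ≤ (1 + αM/2) v ≤ 2v`; with `0 ≤ ζ₁ ≤ π/4` the integrand is at most
`(π/2) v`. Cauchy–Schwarz on the interval of length 2 gives `∫ v ≤ √2 ‖v‖₂ ≤ 2 M e^{-μ₁ t}`,
hence the bound `π M e^{-μ₁ t}`.
-/

theorem zeta1_nonneg {x : ℝ} (hx : x ∈ Icc (-1 : ℝ) 1) : 0 ≤ zeta1 x := by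
  have hcos : 0 ≤ Real.cos (π * x / 2) := by
    apply Real.cos_nonneg_of_mem_Icc
    constructor <;> nlinarith [hx.1, hx.2, Real.pi_pos]
  unfold zeta1
  positivity

theorem zeta1_le (x : ℝ) : zeta1 x ≤ π / 4 := by
  unfold zeta1
  nlinarith [Real.cos_le_one (π * x / 2), Real.pi_pos]

theorem add_half_mul_sq_le_add_half_mul_sq {α a b : ℝ} (hα₀ : 0 ≤ α) (hα₁ : α ≤ 1)
    (ha : -1 ≤ a) (hab : a ≤ b) : a + α / 2 * a ^ 2 ≤ b + α / 2 * b ^ 2 := by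
  have hfactor : 0 ≤ 1 + α / 2 * (a + b) := by nlinarith
  nlinarith [mul_nonneg (sub_nonneg.2 hab) hfactor]

theorem add_half_mul_sq_le_two_mul {α M b : ℝ} (hα₀ : 0 ≤ α) (hαM : α * M ≤ 2)
    (hb₀ : 0 ≤ b) (hbM : b ≤ M) : b + α / 2 * b ^ 2 ≤ 2 * b := by
  nlinarith [mul_le_mul_of_nonneg_left hbM (mul_nonneg hα₀ hb₀)]

theorem zeta1_mul_add_half_mul_sq_le {α M a b x : ℝ} (hx : x ∈ Icc (-1 : ℝ) 1)
    (hα₀ : 0 ≤ α) (hα₁ : α ≤ 1) (hαM : α * M ≤ 2)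
    (ha : -1 ≤ a) (hab : a ≤ b) (hb₀ : 0 ≤ b) (hbM : b ≤ M) :
    zeta1 x * (a + α / 2 * a ^ 2) ≤ π / 2 * b :=
  calc zeta1 x * (a + α / 2 * a ^ 2) ≤ zeta1 x * (2 * b) :=
        mul_le_mul_of_nonneg_left ((add_half_mul_sq_le_add_half_mul_sq hα₀ hα₁ ha hab).trans
          (add_half_mul_sq_le_two_mul hα₀ hαM hb₀ hbM)) (zeta1_nonneg hx)
    _ ≤ π / 4 * (2 * b) := by gcongr; exact zeta1_le x
    _ = π / 2 * b := by ring

section Integral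

variable {α : Type*} [MeasurableSpace α] {μ : Measure α}

/-- No integrability of `f` is needed: otherwise its integral is `0`. -/
theorem integral_le_of_ae_le_of_integral_nonneg {f g : α → ℝ} (hg : Integrable g μ)
    (hfg : f ≤ᵐ[μ] g) (hg₀ : 0 ≤ ∫ x, g x ∂μ) : ∫ x, f x ∂μ ≤ ∫ x, g x ∂μ := by
  by_cases hf : Integrable f μ
  · exact integral_mono_ae hf hg hfg
  · rwa [integral_undef hf]

theorem integral_le_sqrt_measureReal_univ_mul_sqrt_integral_sq [IsFiniteMeasure μ]
    {f : α → ℝ} (hf : MemLp f 2 μ) :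
    ∫ x, f x ∂μ ≤ √(μ.real univ) * √(∫ x, f x ^ 2 ∂μ) := by
  have holder := integral_mul_norm_le_Lp_mul_Lq Real.HolderConjugate.two_two
    (memLp_const (1 : ℝ)) (by simpa using hf) (μ := μ)
  simp only [norm_one, one_mul, integral_const, smul_eq_mul, one_pow, mul_one, Real.rpow_two,
    Real.norm_eq_abs, sq_abs, ← Real.sqrt_eq_rpow] at holder
  exact (integral_mono (hf.integrable one_le_two) (hf.integrable one_le_two).abs
    fun x => le_abs_self _).trans holder

end Integral

theorem functional_decay_general (M α t : ℝ) (hM : 0 ≤ M) (hα₀ : 0 ≤ α)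
    (hα₁ : α ≤ min 1 (2 / (1 + M)))
    (u v : ℝ → ℝ) (hv_meas : Measurable v)
    (hu_lb : ∀ᵐ x ∂(volume.restrict (Set.Ioo (-1 : ℝ) 1)), -1 ≤ u x)
    (hv_nonneg : ∀ᵐ x ∂(volume.restrict (Set.Ioo (-1 : ℝ) 1)), 0 ≤ v x)
    (hv_ub : ∀ᵐ x ∂(volume.restrict (Set.Ioo (-1 : ℝ) 1)), v x ≤ M)
    (huv : ∀ᵐ x ∂(volume.restrict (Set.Ioo (-1 : ℝ) 1)), u x ≤ v x)
    (hv_L2 : IntegrableOn (fun x => v x ^ 2) (Set.Ioo (-1 : ℝ) 1))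
    (hv_decay : Real.sqrt (∫ x in Set.Ioo (-1 : ℝ) 1, v x ^ 2) ≤
      Real.sqrt 2 * M * Real.exp (-(π ^ 2 / 4) * t)) :
    ∫ x in Set.Ioo (-1 : ℝ) 1, zeta1 x * (u x + α / 2 * u x ^ 2) ≤
      π * (M + M ^ 2) * Real.exp (-(π ^ 2 / 4) * t) := by
  have hα_one : α ≤ 1 := hα₁.trans (min_le_left _ _)
  have hαM : α * M ≤ 2 := by
    have := (le_div_iff₀ (by linarith)).1 (hα₁.trans (min_le_right _ _))
    linarith
  have hv : MemLp v 2 (volume.restrict (Ioo (-1 : ℝ) 1)) :=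
    (memLp_two_iff_integrable_sq hv_meas.aestronglyMeasurable).2 hv_L2
  have hpointwise : ∀ᵐ x ∂(volume.restrict (Ioo (-1 : ℝ) 1)),
      zeta1 x * (u x + α / 2 * u x ^ 2) ≤ π / 2 * v x := by
    filter_upwards [hu_lb, hv_nonneg, hv_ub, huv, ae_restrict_mem measurableSet_Ioo]
      with x hu hv₀ hvM huv hx
    exact zeta1_mul_add_half_mul_sq_le (Ioo_subset_Icc_self hx) hα₀ hα_one hαM hu huv hv₀ hvM
  have hcauchy_schwarz := integral_le_sqrt_measureReal_univ_mul_sqrt_integral_sq hv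
  rw [measureReal_restrict_apply_univ, Real.volume_real_Ioo_of_le (by norm_num),
    show (1 : ℝ) - -1 = 2 by norm_num] at hcauchy_schwarz
  calc ∫ x in Ioo (-1 : ℝ) 1, zeta1 x * (u x + α / 2 * u x ^ 2)
      ≤ ∫ x in Ioo (-1 : ℝ) 1, π / 2 * v x :=
        integral_le_of_ae_le_of_integral_nonneg ((hv.integrable one_le_two).const_mul _)
          hpointwise (integral_nonneg_of_ae (by filter_upwards [hv_nonneg] with x hx; positivity))
    _ = π / 2 * ∫ x in Ioo (-1 : ℝ) 1, v x := integral_const_mul _ _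
    _ ≤ π / 2 * (√2 * (√2 * M * Real.exp (-(π ^ 2 / 4) * t))) := by
        gcongr
        exact hcauchy_schwarz.trans (by gcongr)
    _ = π * M * Real.exp (-(π ^ 2 / 4) * t) := by
        rw [← mul_assoc √2, ← mul_assoc √2, Real.mul_self_sqrt zero_le_two]
        ring
    _ ≤ π * (M + M ^ 2) * Real.exp (-(π ^ 2 / 4) * t) := by
        gcongr
        exact le_add_of_nonneg_right (sq_nonneg M)

theorem functional_decay (M α t : ℝ) (hM : 0 ≤ M) (hα₀ : 0 ≤ α)
    (hα₁ : α ≤ min 1 (2 / (1 + M))) (ht : 0 ≤ t)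
    (u v : ℝ → ℝ) (hu_meas : Measurable u) (hv_meas : Measurable v)
    (hu_lb : ∀ᵐ x ∂(volume.restrict (Set.Ioo (-1 : ℝ) 1)), -1 ≤ u x)
    (hv_nonneg : ∀ᵐ x ∂(volume.restrict (Set.Ioo (-1 : ℝ) 1)), 0 ≤ v x)
    (hv_ub : ∀ᵐ x ∂(volume.restrict (Set.Ioo (-1 : ℝ) 1)), v x ≤ M)
    (huv : ∀ᵐ x ∂(volume.restrict (Set.Ioo (-1 : ℝ) 1)), u x ≤ v x)
    (hv_L2 : IntegrableOn (fun x => v x ^ 2) (Set.Ioo (-1 : ℝ) 1))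
    (hv_decay : Real.sqrt (∫ x in Set.Ioo (-1 : ℝ) 1, v x ^ 2) ≤
      Real.sqrt 2 * M * Real.exp (-(π ^ 2 / 4) * t)) :
    ∫ x in Set.Ioo (-1 : ℝ) 1, zeta1 x * (u x + α / 2 * u x ^ 2) ≤
      π * (M + M ^ 2) * Real.exp (-(π ^ 2 / 4) * t) :=
  functional_decay_general M α t hM hα₀ hα₁ u v hv_meas hu_lb hv_nonneg hv_ub huv hv_L2 hv_decay
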